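/- arXiv:2312.10533 — 2 statements merged into one kernel-verified Lean document; each statement's English description precedes it below -/
import Mathlib

section
/- Let n ≥ 1 and let k_1, …, k_n be positive integers; write W(a) = χ_{k_1}∘χ_{k_2}∘⋯∘χ_{k_n}(a) for a ∈ {1,2,3}. Then: (i) W(3) is a prefix of W(2); (ii) if k_n ≥ 2, then W(1) with its last letter removed is a prefix of W(3), and the last letter of W(1) equals 1 if n is even and equals 2 if n is odd; (iii) if k_n = 1 and n ≥ 2, then W(3) is a prefix of W(1). -/
open Filter Topology MeasureTheory

/-- The substitution `χ_k` on the alphabet `{1,2,3}`, coded as `Fin 3 = {0,1,2}`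
(letter 1 ↦ 0, letter 2 ↦ 1, letter 3 ↦ 2):
`χ_k(1) = 2`, `χ_k(2) = 3 1^k`, `χ_k(3) = 3 1^(k-1)`. -/
def chiSub (k : ℕ) : Fin 3 → List (Fin 3) :=
  ![[1], 2 :: List.replicate k 0, 2 :: List.replicate (k - 1) 0]

/-- Extension of `χ_k` to finite words by concatenation. -/
def applyChi (k : ℕ) (w : List (Fin 3)) : List (Fin 3) := w.flatMap (chiSub k)

/-- `compApply k n w = χ_{k 1} ∘ χ_{k 2} ∘ ⋯ ∘ χ_{k n} (w)`. -/
def compApply (k : ℕ → ℕ) : ℕ → List (Fin 3) → List (Fin 3)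
  | 0, w => w
  | n + 1, w => compApply k n (applyChi (k (n + 1)) w)

/-- Condition (★): k_{2i} > 1` for infinitely many `i` and `k_{2i-1} > 1`
for infinitely many `i`. -/
def StarCond (k : ℕ → ℕ) : Prop :=
  (∀ N, ∃ i ≥ N, 1 < k (2 * i)) ∧ (∀ N, ∃ i ≥ N, 1 < k (2 * i - 1))

/-- `w` is a prefix of the infinite sequence `x`. -/
def IsPrefixSeq (w : List (Fin 3)) (x : ℕ → Fin 3) : Prop :=
  w = List.ofFn fun i : Fin w.length => x i

/-- The left shift `σ`. -/
def shift (x : ℕ → Fin 3) : ℕ → Fin 3 := fun i => x (i + 1)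

/-- The closure of the `σ`-orbit of `ρ`: the subshift `X`. -/
def orbitClosure (ρ : ℕ → Fin 3) : Set (ℕ → Fin 3) :=
  closure {y | ∃ n : ℕ, y = fun i => ρ (i + n)}

/-!
Write `A_m, B_m, C_m` for the images of the letters `1, 2, 3` under `χ_{k_1} ∘ ⋯ ∘ χ_{k_m}`.
Reading off the images of the letters under `χ_{k_{m+1}}` gives
`A_{m+1} = B_m`, `B_{m+1} = C_m A_m^{k_{m+1}}` and `C_{m+1} = C_m A_m^{k_{m+1}-1}`,
so `B_{m+1} = C_{m+1} A_m` and `A_{m+2} = C_{m+1} A_m`. The last relation fixes the last letter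
of `A_m` by its parity. A joint induction shows that `A_m` minus its last letter is a prefix of
`B_m`, and `B_m` minus its last letter a prefix of `C_m A_m`; the latter is a prefix of
`C_{m+1}` as soon as `k_{m+1} ≥ 2`. When `k_{m+1} = 1`, instead, `C_{m+1} = C_m` is a prefix
of `B_m = A_{m+1}`.
-/

section

variable (k : ℕ → ℕ)

theorem compApply_append : ∀ (n : ℕ) (u v : List (Fin 3)),
    compApply k n (u ++ v) = compApply k n u ++ compApply k n v
  | 0, _, _ => rfl
  | n + 1, u, v => by
    simp only [compApply, applyChi, List.flatMap_append]
    exact compApply_append n _ _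

theorem compApply_cons (n : ℕ) (a : Fin 3) (w : List (Fin 3)) :
    compApply k n (a :: w) = compApply k n [a] ++ compApply k n w :=
  compApply_append k n [a] w

theorem compApply_nil : ∀ n : ℕ, compApply k n [] = []
  | 0 => rfl
  | n + 1 => compApply_nil n

theorem compApply_ne_nil : ∀ (n : ℕ) {w : List (Fin 3)}, w ≠ [] → compApply k n w ≠ []
  | 0, _, hw => hw
  | n + 1, w, hw => by
    refine compApply_ne_nil n fun h => ?_
    obtain ⟨a, ha⟩ := List.exists_mem_of_ne_nil w hw
    have ha' := List.flatMap_eq_nil_iff.mp h a ha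
    fin_cases a <;> simp [chiSub] at ha'

theorem compApply_prefix_compApply (n : ℕ) {u v : List (Fin 3)} (h : u <+: v) :
    compApply k n u <+: compApply k n v := by
  obtain ⟨t, rfl⟩ := h
  rw [compApply_append]
  exact List.prefix_append _ _

theorem compApply_singleton_prefix_replicate (n : ℕ) (a : Fin 3) {j : ℕ} (hj : j ≠ 0) :
    compApply k n [a] <+: compApply k n (List.replicate j a) := by
  obtain ⟨i, rfl⟩ := Nat.exists_eq_succ_of_ne_zero hj
  rw [List.replicate_succ, compApply_cons k n a (List.replicate i a)]
  exact List.prefix_append _ _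

theorem compApply_succ_singleton (n : ℕ) (a : Fin 3) :
    compApply k (n + 1) [a] = compApply k n (chiSub (k (n + 1)) a) := by
  simp [compApply, applyChi]

theorem compApply_succ_singleton_zero (n : ℕ) :
    compApply k (n + 1) [0] = compApply k n [1] :=
  compApply_succ_singleton k n 0

theorem compApply_succ_singleton_one (n : ℕ) :
    compApply k (n + 1) [1] =
      compApply k n [2] ++ compApply k n (List.replicate (k (n + 1)) 0) :=
  (compApply_succ_singleton k n 1).trans (compApply_cons k n 2 _)

theorem compApply_succ_singleton_two (n : ℕ) :
    compApply k (n + 1) [2] =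
      compApply k n [2] ++ compApply k n (List.replicate (k (n + 1) - 1) 0) :=
  (compApply_succ_singleton k n 2).trans (compApply_cons k n 2 _)

theorem compApply_succ_singleton_one_eq_append {n : ℕ} (hk : 1 ≤ k (n + 1)) :
    compApply k (n + 1) [1] = compApply k (n + 1) [2] ++ compApply k n [0] := by
  obtain ⟨j, hj⟩ := Nat.exists_eq_add_of_le' hk
  rw [compApply_succ_singleton_one, compApply_succ_singleton_two, hj, Nat.add_sub_cancel,
    List.replicate_succ', compApply_append, List.append_assoc]

theorem compApply_succ_singleton_two_prefix_one (n : ℕ) :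
    compApply k (n + 1) [2] <+: compApply k (n + 1) [1] := by
  rw [compApply_succ_singleton_one, compApply_succ_singleton_two, List.prefix_append_right_inj]
  exact compApply_prefix_compApply k n (List.prefix_replicate_iff.mpr (by simp))

theorem getLast?_compApply_singleton_zero (hpos : ∀ i, 1 ≤ i → 1 ≤ k i) :
    ∀ n : ℕ, (compApply k n [0]).getLast? = some (if Even n then 0 else 1)
  | 0 => rfl
  | 1 => rfl
  | n + 2 => by
    rw [compApply_succ_singleton_zero,
      compApply_succ_singleton_one_eq_append k (hpos (n + 1) (Nat.le_add_left 1 n)),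
      List.getLast?_append_of_ne_nil _ (compApply_ne_nil k n (List.cons_ne_nil _ _)),
      getLast?_compApply_singleton_zero hpos n]
    simp [Nat.even_add]

theorem dropLast_compApply_singleton_prefix (hpos : ∀ i, 1 ≤ i → 1 ≤ k i) (n : ℕ) :
    (compApply k n [0]).dropLast <+: compApply k n [1] ∧
      (compApply k n [1]).dropLast <+: compApply k n [2] ++ compApply k n [0] := by
  induction n with
  | zero => exact ⟨List.nil_prefix, List.nil_prefix⟩
  | succ n ih =>
    have hk := hpos (n + 1) (Nat.le_add_left 1 n)
    constructor
    · rw [compApply_succ_singleton_zero, compApply_succ_singleton_one]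
      exact ih.2.trans (List.prefix_append_right_inj _ |>.mpr
        (compApply_singleton_prefix_replicate k n 0 (by omega)))
    · rw [compApply_succ_singleton_one_eq_append k hk,
        List.dropLast_append_of_ne_nil (compApply_ne_nil k n (List.cons_ne_nil _ _)),
        compApply_succ_singleton_zero, List.prefix_append_right_inj]
      exact ih.1

end

/-- writing `W(a) = χ_{k_1} ∘ ⋯ ∘ χ_{k_n}(a)` (letters 1,2,3 coded as
`0,1,2 : Fin 3`):
(i) `W(3)` is a prefix of `W(2)`;
(ii) if `k_n ≥ 2` then `W(1)` minus its last letter is a prefix of `W(3)`, and the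
last letter of `W(1)` is `1` if `n` is even and `2` if `n` is odd;
(iii) if `k_n = 1` and `n ≥ 2` then `W(3)` is a prefix of `W(1)`. -/
theorem statement18 (k : ℕ → ℕ) (hpos : ∀ i, 1 ≤ i → 1 ≤ k i) (n : ℕ) (hn : 1 ≤ n) :
    (compApply k n [2]) <+: (compApply k n [1]) ∧
    (2 ≤ k n →
      (compApply k n [0]).dropLast <+: (compApply k n [2]) ∧
      (compApply k n [0]).getLast? =
        some (if Even n then (0 : Fin 3) else (1 : Fin 3))) ∧
    (k n = 1 → 2 ≤ n → (compApply k n [2]) <+: (compApply k n [0])) := by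
  obtain ⟨m, rfl⟩ := Nat.exists_eq_add_of_le' hn
  refine ⟨compApply_succ_singleton_two_prefix_one k m,
    fun hk => ⟨?_, getLast?_compApply_singleton_zero k hpos (m + 1)⟩, fun hk _ => ?_⟩
  · rw [compApply_succ_singleton_zero, compApply_succ_singleton_two]
    exact (dropLast_compApply_singleton_prefix k hpos m).2.trans
      (List.prefix_append_right_inj _ |>.mpr
        (compApply_singleton_prefix_replicate k m 0 (by omega)))
  · obtain ⟨i, rfl⟩ : ∃ i, m = i + 1 := Nat.exists_eq_add_of_le' (by omega)
    rw [compApply_succ_singleton_two, hk, Nat.sub_self, List.replicate_zero, compApply_nil,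
      List.append_nil, compApply_succ_singleton_zero]
    exact compApply_succ_singleton_two_prefix_one k i
end

section
/- Let C ≥ 2, let n ≥ 2 and let k_1, …, k_n be positive integers such that either 2 ≤ k_n ≤ C, or k_n = 1 and k_{n-1} ≥ 2. Then for every j with 0 ≤ j ≤ n−1 such that the matrix M = A_{k_{n-j}} A_{k_{n-j+1}} ⋯ A_{k_n} has all entries ≥ 1 (M is a full matrix), one has M_{u,v} ≤ 4C · M_{u,v'} for all u, v, v' ∈ {1,2,3}; equivalently, the number of occurrences of the letter u in χ_{k_{n-j}}∘⋯∘χ_{k_n}(v) is at most 4C times the number of occurrences of u in χ_{k_{n-j}}∘⋯∘χ_{k_n}(v'). -/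
open Filter Topology MeasureTheory

/-- The matrix `A_k`, with rows `(0,k,k-1)`, `(1,0,0)`, `(0,1,1)`: the `(i,j)` entry
is the number of occurrences of letter `i` in `χ_k(j)`. -/
def AmatZ (k : ℕ) : Matrix (Fin 3) (Fin 3) ℤ :=
  !![0, (k : ℤ), (k : ℤ) - 1; 1, 0, 0; 0, 1, 1]

/-- `compRange k m len w = χ_{k m} ∘ χ_{k (m+1)} ∘ ⋯ ∘ χ_{k (m+len-1)} (w)`. -/
def compRange (k : ℕ → ℕ) (m : ℕ) : ℕ → List (Fin 3) → List (Fin 3)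
  | 0, w => w
  | len + 1, w => compRange k m len (applyChi (k (m + len)) w)

/-!
Right multiplication by `A_m` acts on a row as `(x, y, z) ↦ (y, m x + z, (m - 1) x + z)`.
Starting from the rows of the identity, every row of a product of matrices `A_m` with `m ≥ 1`
is `(1, 0, 0)`, `(0, 0, 1)`, or satisfies `z ≤ y`, `x ≤ y + z` and (`y ≤ x + 2 z` or `y = 1`).
Multiplying such a row by a last factor `A_b` with `2 ≤ b ≤ C`, or by `A_a A_1` with `a ≥ 2`,
gives a row whose entries, once positive, are within a factor `2 C + 1`, resp. `3`, of each
other.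
The letter counts of `χ_{k_{n-j}} ∘ ⋯ ∘ χ_{k_n}(v)` form the `v`-th column of the product.
-/

open Matrix

def Amat (k : ℕ) : Matrix (Fin 3) (Fin 3) ℕ :=
  !![0, k, k - 1; 1, 0, 0; 0, 1, 1]

theorem AmatZ_eq_map {k : ℕ} (hk : 1 ≤ k) : AmatZ k = (Amat k).map (↑) := by
  ext i j
  fin_cases i <;> fin_cases j <;> simp [AmatZ, Amat, Nat.cast_sub hk]

theorem prod_map_AmatZ_apply {l : List ℕ} (hl : ∀ m ∈ l, 1 ≤ m) (u v : Fin 3) :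
    (l.map AmatZ).prod u v = ((l.map Amat).prod u v : ℤ) := by
  have : (l.map AmatZ).prod = (Nat.castRingHom ℤ).mapMatrix (l.map Amat).prod := by
    rw [map_list_prod, List.map_map]
    exact congrArg _ (List.map_congr_left fun m hm => AmatZ_eq_map (hl m hm))
  simp [this]

def letterCount (w : List (Fin 3)) : Fin 3 → ℕ := fun u => w.count u

theorem letterCount_chiSub (k : ℕ) (a : Fin 3) : letterCount (chiSub k a) = (Amat k).col a := by
  ext u
  fin_cases a <;> fin_cases u <;>
    simp [letterCount, chiSub, Amat, List.count_replicate]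

theorem letterCount_applyChi (k : ℕ) (w : List (Fin 3)) :
    letterCount (applyChi k w) = Amat k *ᵥ letterCount w := by
  induction w with
  | nil => ext u; simp [letterCount, applyChi, mulVec, dotProduct]
  | cons a w ih =>
    have hcons : letterCount (a :: w) = Pi.single a 1 + letterCount w := by
      ext u
      by_cases h : a = u <;> simp [letterCount, h, add_comm]
    have happ : letterCount (applyChi k (a :: w)) =
        letterCount (chiSub k a) + letterCount (applyChi k w) := by
      ext u; simp [letterCount, applyChi, List.count_append]
    rw [happ, ih, hcons, mulVec_add, mulVec_single_one, letterCount_chiSub]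

theorem letterCount_compRange (k : ℕ → ℕ) (m len : ℕ) (w : List (Fin 3)) :
    letterCount (compRange k m len w) =
      ((List.range len).map fun i => Amat (k (m + i))).prod *ᵥ letterCount w := by
  induction len generalizing w with
  | zero => simp [compRange]
  | succ len ih =>
    rw [compRange, ih, letterCount_applyChi, mulVec_mulVec, List.range_succ, List.map_append,
      List.prod_append, List.map_singleton, List.prod_singleton]

theorem count_compRange_singleton (k : ℕ → ℕ) (m len : ℕ) (u v : Fin 3) :
    (compRange k m len [v]).count u =
      ((List.range len).map fun i => Amat (k (m + i))).prod u v := by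
  have := congrFun (letterCount_compRange k m len [v]) u
  have hv : letterCount [v] = Pi.single v 1 := by
    ext t
    by_cases h : v = t <;> simp [letterCount, h]
  simpa [letterCount, hv] using this

theorem vecMul_Amat (r : Fin 3 → ℕ) (m : ℕ) :
    r ᵥ* Amat m = ![r 1, m * r 0 + r 2, (m - 1) * r 0 + r 2] := by
  ext i
  fin_cases i <;> simp [Amat, vecMul, dotProduct, Fin.sum_univ_three, mul_comm]

def IsAdmissibleRow (r : Fin 3 → ℕ) : Prop :=
  (r 0 = 1 ∧ r 1 = 0 ∧ r 2 = 0) ∨ (r 0 = 0 ∧ r 1 = 0 ∧ r 2 = 1) ∨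
    (r 2 ≤ r 1 ∧ r 0 ≤ r 1 + r 2 ∧ (r 1 ≤ r 0 + 2 * r 2 ∨ r 1 = 1))

theorem isAdmissibleRow_one (u : Fin 3) : IsAdmissibleRow ((1 : Matrix (Fin 3) (Fin 3) ℕ) u) := by
  fin_cases u <;> simp [IsAdmissibleRow, one_apply]

theorem IsAdmissibleRow.vecMul_Amat {r : Fin 3 → ℕ} (hr : IsAdmissibleRow r) {m : ℕ}
    (hm : 1 ≤ m) :
    IsAdmissibleRow (r ᵥ* Amat m) := by
  obtain ⟨m, rfl⟩ : ∃ m', m = m' + 1 := ⟨m - 1, by omega⟩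
  have hx0 : r 0 = 0 → m * r 0 = 0 := fun h => by simp [h]
  have hx1 : r 0 = 1 → m * r 0 = m := fun h => by simp [h]
  simp only [IsAdmissibleRow, _root_.vecMul_Amat, Nat.add_sub_cancel, add_mul, one_mul,
    cons_val_zero, cons_val_one, cons_val_two, head_cons, tail_cons] at hr ⊢
  omega

theorem isAdmissibleRow_prod {l : List ℕ} (hl : ∀ m ∈ l, 1 ≤ m) (u : Fin 3) :
    IsAdmissibleRow ((l.map Amat).prod u) := by
  induction l using List.reverseRecOn with
  | nil => exact isAdmissibleRow_one u
  | append_singleton l m ih =>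
    simp only [List.map_append, List.map_singleton, List.prod_append, List.prod_singleton,
      mul_apply_eq_vecMul]
    exact (ih fun a ha => hl a (by simp [ha])).vecMul_Amat (hl m (by simp))

def IsBalanced (c : ℕ) (r : Fin 3 → ℕ) : Prop :=
  ∀ v v', r v ≤ c * r v'

theorem isBalanced_of_le_mul {c lo : ℕ} {r : Fin 3 → ℕ} (hlo : ∀ v, lo ≤ r v)
    (hhi : ∀ v, r v ≤ c * lo) : IsBalanced c r :=
  fun v v' => (hhi v).trans (Nat.mul_le_mul_left c (hlo v'))

theorem IsAdmissibleRow.isBalanced_vecMul_Amat {r : Fin 3 → ℕ} (hr : IsAdmissibleRow r)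
    {b C : ℕ} (hb : 2 ≤ b) (hbC : b ≤ C) (hpos : ∀ v, 1 ≤ (r ᵥ* Amat b) v) :
    IsBalanced (4 * C) (r ᵥ* Amat b) := by
  rw [_root_.vecMul_Amat] at hpos ⊢
  have hy := hpos 0
  have hs := hpos 2
  simp only [cons_val_zero, cons_val_two, head_cons, tail_cons] at hy hs
  obtain ⟨hzy, hxyz, hyxz⟩ :
      r 2 ≤ r 1 ∧ r 0 ≤ r 1 + r 2 ∧ (r 1 ≤ r 0 + 2 * r 2 ∨ r 1 = 1) := by
    unfold IsAdmissibleRow at hr; omega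
  have hbx := Nat.sub_one_mul b (r 0)
  have hx : r 0 ≤ (b - 1) * r 0 := Nat.le_mul_of_pos_left _ (by omega)
  have hB : b * r 0 ≤ 2 * (C * r 1) :=
    calc b * r 0 ≤ b * (2 * r 1) := Nat.mul_le_mul_left b (by omega)
      _ ≤ C * (2 * r 1) := Nat.mul_le_mul_right _ hbC
      _ = 2 * (C * r 1) := by ring
  have hC : ∀ t, t ≤ C * t := fun t => Nat.le_mul_of_pos_left t (by omega)
  have := hC (r 1)
  have := hC (b * r 0 + r 2)
  have := hC ((b - 1) * r 0 + r 2)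
  intro v v'
  fin_cases v <;> fin_cases v' <;> simp [mul_assoc] <;> omega

theorem IsAdmissibleRow.isBalanced_vecMul_Amat_vecMul_Amat_one {r : Fin 3 → ℕ}
    (hr : IsAdmissibleRow r) {a C : ℕ} (ha : 2 ≤ a) (hC : 1 ≤ C)
    (hpos : ∀ v, 1 ≤ (r ᵥ* Amat a ᵥ* Amat 1) v) :
    IsBalanced (4 * C) (r ᵥ* Amat a ᵥ* Amat 1) := by
  simp only [_root_.vecMul_Amat, cons_val_zero, cons_val_one, cons_val_two, head_cons, tail_cons,
    one_mul, Nat.sub_self, zero_mul, zero_add] at hpos ⊢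
  have hs := hpos 2
  simp only [cons_val_two, head_cons, tail_cons] at hs
  have hx : r 0 ≤ (a - 1) * r 0 := Nat.le_mul_of_pos_left _ (by omega)
  have hax := Nat.sub_one_mul a (r 0)
  have hy : r 1 ≤ 2 * ((a - 1) * r 0 + r 2) := by unfold IsAdmissibleRow at hr; omega
  refine isBalanced_of_le_mul (lo := (a - 1) * r 0 + r 2) (fun v => ?_) (fun v => ?_)
  · fin_cases v <;>
      simp only [Fin.zero_eta, Fin.mk_one, Fin.reduceFinMk, cons_val_zero, cons_val_one,
        cons_val_two, head_cons, tail_cons] <;> omega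
  · have : 3 * ((a - 1) * r 0 + r 2) ≤ 4 * C * ((a - 1) * r 0 + r 2) :=
      Nat.mul_le_mul_right _ (by omega)
    fin_cases v <;> simp <;> omega

theorem isBalanced_prod_Amat_append_pair {C a b : ℕ} (hC : 1 ≤ C) {l : List ℕ}
    (hl : ∀ m ∈ l ++ [a, b], 1 ≤ m) (hab : (2 ≤ b ∧ b ≤ C) ∨ (b = 1 ∧ 2 ≤ a))
    (u : Fin 3) (hpos : ∀ v, 1 ≤ ((l ++ [a, b]).map Amat).prod u v) :
    IsBalanced (4 * C) (((l ++ [a, b]).map Amat).prod u) := by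
  have hrow : ((l ++ [a, b]).map Amat).prod u = (l.map Amat).prod u ᵥ* Amat a ᵥ* Amat b := by
    simp [List.prod_append, mul_apply_eq_vecMul]
  rw [hrow] at hpos ⊢
  rcases hab with ⟨hb, hbC⟩ | ⟨rfl, ha⟩
  · have hla : ∀ m ∈ l ++ [a], 1 ≤ m := fun m hm => hl m (by simp at hm ⊢; tauto)
    have hadm := isAdmissibleRow_prod hla u
    simp only [List.map_append, List.map_singleton, List.prod_append, List.prod_singleton,
      mul_apply_eq_vecMul] at hadm
    exact hadm.isBalanced_vecMul_Amat hb hbC hpos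
  · exact (isAdmissibleRow_prod (fun m hm => hl m (by simp [hm])) u)
      |>.isBalanced_vecMul_Amat_vecMul_Amat_one ha hC hpos

theorem statement19_general (C n : ℕ) (hC : 2 ≤ C) (k : ℕ → ℕ)
    (hpos : ∀ i, 1 ≤ i → 1 ≤ k i)
    (hlast : (2 ≤ k n ∧ k n ≤ C) ∨ (k n = 1 ∧ 2 ≤ k (n - 1))) :
    ∀ j : ℕ, j ≤ n - 1 →
      (∀ u v : Fin 3,
        1 ≤ (((List.range (j + 1)).map fun i => AmatZ (k (n - j + i))).prod) u v) →
      (∀ u v v' : Fin 3,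
        (((List.range (j + 1)).map fun i => AmatZ (k (n - j + i))).prod) u v ≤
          4 * C * (((List.range (j + 1)).map fun i => AmatZ (k (n - j + i))).prod) u v') ∧
      (∀ u v v' : Fin 3,
        (compRange k (n - j) (j + 1) [v]).count u ≤
          4 * C * (compRange k (n - j) (j + 1) [v']).count u) := by
  intro j hj hfull
  obtain ⟨j, rfl⟩ : ∃ j', j = j' + 1 := by
    rcases j with _ | j
    · -- a single matrix `A_m` has a zero `(1,1)` entry, so it is never full
      simpa [AmatZ] using hfull 0 0
    · exact ⟨j, rfl⟩
  set l := (List.range (j + 2)).map fun i => k (n - (j + 1) + i) with hl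
  have hlpos : ∀ m ∈ l, 1 ≤ m := by
    simp only [hl, List.mem_map, List.mem_range]
    rintro _ ⟨i, -, rfl⟩
    exact hpos _ (by omega)
  have hsplit : l = (List.range j).map (fun i => k (n - (j + 1) + i)) ++ [k (n - 1), k n] := by
    rw [hl, List.range_succ, List.range_succ, List.map_append, List.map_append, List.append_assoc]
    simp only [List.map_singleton, List.singleton_append,
      show n - (j + 1) + j = n - 1 by omega, show n - (j + 1) + (j + 1) = n by omega]
  have hZ : ∀ u v, (((List.range (j + 2)).map fun i => AmatZ (k (n - (j + 1) + i))).prod) u v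
      = ((l.map Amat).prod u v : ℤ) := by
    simpa only [hl, List.map_map, Function.comp_def] using prod_map_AmatZ_apply hlpos
  have hcount : ∀ u v,
      (compRange k (n - (j + 1)) (j + 2) [v]).count u = (l.map Amat).prod u v := by
    simpa only [hl, List.map_map, Function.comp_def] using
      count_compRange_singleton k (n - (j + 1)) (j + 2)
  have hbal : ∀ u, IsBalanced (4 * C) ((l.map Amat).prod u) := by
    intro u
    rw [hsplit] at hlpos ⊢
    refine isBalanced_prod_Amat_append_pair (by omega) hlpos hlast u fun v => ?_
    rw [← hsplit]
    exact_mod_cast (hZ u v) ▸ hfull u v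
  exact ⟨fun u v v' => by rw [hZ, hZ]; exact_mod_cast hbal u v v',
    fun u v v' => by rw [hcount, hcount]; exact hbal u v v'⟩

/-- let `C ≥ 2`, `n ≥ 2` and `k_1, …, k_n` positive with `2 ≤ k_n ≤ C`,
or `k_n = 1` and `k_{n−1} ≥ 2`. For every `0 ≤ j ≤ n−1` such that the matrix
`M = A_{k_{n−j}} ⋯ A_{k_n}` has all entries `≥ 1`, one has `M_{u,v} ≤ 4C·M_{u,v'}`
for all `u,v,v'`; equivalently, the number of occurrences of any letter `u` in
`χ_{k_{n−j}} ∘ ⋯ ∘ χ_{k_n}(v)` is at most `4C` times its number of occurrences in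
`χ_{k_{n−j}} ∘ ⋯ ∘ χ_{k_n}(v')`. -/
theorem statement19 (C n : ℕ) (hC : 2 ≤ C) (hn : 2 ≤ n) (k : ℕ → ℕ)
    (hpos : ∀ i, 1 ≤ i → 1 ≤ k i)
    (hlast : (2 ≤ k n ∧ k n ≤ C) ∨ (k n = 1 ∧ 2 ≤ k (n - 1))) :
    ∀ j : ℕ, j ≤ n - 1 →
      (∀ u v : Fin 3,
        1 ≤ (((List.range (j + 1)).map fun i => AmatZ (k (n - j + i))).prod) u v) →
      (∀ u v v' : Fin 3,
        (((List.range (j + 1)).map fun i => AmatZ (k (n - j + i))).prod) u v ≤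
          4 * C * (((List.range (j + 1)).map fun i => AmatZ (k (n - j + i))).prod) u v') ∧
      (∀ u v v' : Fin 3,
        (compRange k (n - j) (j + 1) [v]).count u ≤
          4 * C * (compRange k (n - j) (j + 1) [v']).count u) :=
  statement19_general C n hC k hpos hlast
end
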